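/- Under the Markov assumption X_S − X_0 − X_T for disjoint S,T ⊆ L, for any l ∈ L and S ⊆ L\{l}, v(S∪{l}) − v(S) = I(X_l; X_0) − I(X_l; X_{(L\S)\{l}}), where v(S) = I(X_S; X_0 | X_{L\S}). -/

import Mathlib

noncomputable section
open Finset
open scoped Classical BigOperators

/-- Probability of an event under a pmf on a finite sample space. -/
def Pr {Ω : Type} [Fintype Ω] (p : Ω → ℝ) (E : Ω → Prop) : ℝ :=
  ∑ ω : Ω, if E ω then p ω else 0

/-- `p` is a probability mass function. -/
def IsPMF {Ω : Type} [Fintype Ω] (p : Ω → ℝ) : Prop :=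
  (∀ ω, 0 ≤ p ω) ∧ (∑ ω : Ω, p ω) = 1

/-- Shannon entropy of a finitely-valued random variable `X` under pmf `p`. -/
def ent {Ω α : Type} [Fintype Ω] [Fintype α] (p : Ω → ℝ) (X : Ω → α) : ℝ :=
  -∑ a : α, Pr p (fun ω => X ω = a) * Real.log (Pr p (fun ω => X ω = a))

/-- Conditional Shannon entropy `H(X|Y)`. -/
def condEnt {Ω α β : Type} [Fintype Ω] [Fintype α] [Fintype β]
    (p : Ω → ℝ) (X : Ω → α) (Y : Ω → β) : ℝ :=
  ent p (fun ω => (X ω, Y ω)) - ent p Y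

/-- Mutual information `I(X;Y)`. -/
def mi {Ω α β : Type} [Fintype Ω] [Fintype α] [Fintype β]
    (p : Ω → ℝ) (X : Ω → α) (Y : Ω → β) : ℝ :=
  ent p X + ent p Y - ent p (fun ω => (X ω, Y ω))

/-- Conditional mutual information `I(X;Y|Z)`. -/
def cmi {Ω α β γ : Type} [Fintype Ω] [Fintype α] [Fintype β] [Fintype γ]
    (p : Ω → ℝ) (X : Ω → α) (Y : Ω → β) (Z : Ω → γ) : ℝ :=
  ent p (fun ω => (X ω, Z ω)) + ent p (fun ω => (Y ω, Z ω))
    - ent p (fun ω => (X ω, Y ω, Z ω)) - ent p Z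

/-- `X` and `Y` are conditionally independent given `Z` (Markov chain `X - Z - Y`). -/
def CondIndep {Ω α β γ : Type} [Fintype Ω] [Fintype α] [Fintype β] [Fintype γ]
    (p : Ω → ℝ) (X : Ω → α) (Y : Ω → β) (Z : Ω → γ) : Prop :=
  ∀ (a : α) (b : β) (c : γ),
    Pr p (fun ω => X ω = a ∧ Y ω = b ∧ Z ω = c) * Pr p (fun ω => Z ω = c)
      = Pr p (fun ω => X ω = a ∧ Z ω = c) * Pr p (fun ω => Y ω = b ∧ Z ω = c)

/-- The tuple random variable `X_S = (X_l)_{l ∈ S}`. -/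
def XS {Ω L 𝒳 : Type} [Fintype Ω] (X : L → Ω → 𝒳) (S : Finset L) :
    Ω → (S → 𝒳) :=
  fun ω i => X i ω

/-- The value function of the secret-key generation game:
`v(S) = I(X_S; X_0 | X_{L\S})`. -/
def vGame {Ω L 𝒳 β : Type} [Fintype Ω] [Fintype L] [DecidableEq L] [Fintype 𝒳] [Fintype β]
    (p : Ω → ℝ) (X : L → Ω → 𝒳) (X0 : Ω → β) (S : Finset L) : ℝ :=
  cmi p (XS X S) X0 (XS X Sᶜ)

/-!
Write `W = X_l`, `A = X_S`, `B = X_{(L\S)\{l}}` and `Z = X_0`. Expanding both values of `v`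
into entropies, all joint entropies containing `A` cancel and
`v(S ∪ {l}) - v(S) = H(Z,B) - H(B) - H(W,Z,B) + H(W,B)`, while
`I(W;Z) - I(W;B) = H(Z) - H(W,Z) - H(B) + H(W,B)`. The two differ by `I(W;B|Z)`, which
vanishes by the Markov assumption applied to the disjoint sets `{l}` and `(L\S)\{l}`.
-/

section Entropy
variable {Ω : Type} [Fintype Ω]

lemma Pr_congr (p : Ω → ℝ) {E F : Ω → Prop} (h : ∀ ω, E ω ↔ F ω) : Pr p E = Pr p F :=
  Finset.sum_congr rfl fun ω _ => by simp only [h ω]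

lemma Pr_pos {p : Ω → ℝ} (hp : ∀ ω, 0 ≤ p ω) {E : Ω → Prop} {ω : Ω} (hE : E ω)
    (hpω : 0 < p ω) : 0 < Pr p E := by
  refine hpω.trans_le ?_
  calc p ω = if E ω then p ω else 0 := (if_pos hE).symm
    _ ≤ Pr p E := Finset.single_le_sum (f := fun ω => if E ω then p ω else 0)
        (fun i _ => by split_ifs <;> simp [hp i]) (Finset.mem_univ ω)

lemma sum_Pr_mul {α : Type} [Fintype α] (p : Ω → ℝ) (X : Ω → α) (g : α → ℝ) :
    ∑ a, Pr p (fun ω => X ω = a) * g a = ∑ ω, p ω * g (X ω) := by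
  simp only [Pr, Finset.sum_mul, ite_mul, zero_mul]
  rw [Finset.sum_comm]
  simp

lemma ent_eq_neg_sum_log {α : Type} [Fintype α] (p : Ω → ℝ) (X : Ω → α) :
    ent p X = -∑ ω, p ω * Real.log (Pr p fun ω' => X ω' = X ω) := by
  rw [ent, sum_Pr_mul p X fun a => Real.log (Pr p fun ω' => X ω' = a)]

lemma ent_congr {α α' : Type} [Fintype α] [Fintype α'] (p : Ω → ℝ) {X : Ω → α} {X' : Ω → α'}
    (h : ∀ ω ω', X ω' = X ω ↔ X' ω' = X' ω) : ent p X = ent p X' := by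
  simp only [ent_eq_neg_sum_log, Pr_congr p (h _)]

variable {α β γ α' β' γ' : Type} [Fintype α] [Fintype β] [Fintype γ]
  [Fintype α'] [Fintype β'] [Fintype γ']

lemma cmi_congr (p : Ω → ℝ) {X : Ω → α} {Y : Ω → β} {Z : Ω → γ}
    {X' : Ω → α'} {Y' : Ω → β'} {Z' : Ω → γ'}
    (hX : ∀ ω ω', X ω' = X ω ↔ X' ω' = X' ω) (hY : ∀ ω ω', Y ω' = Y ω ↔ Y' ω' = Y' ω)
    (hZ : ∀ ω ω', Z ω' = Z ω ↔ Z' ω' = Z' ω) : cmi p X Y Z = cmi p X' Y' Z' := by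
  unfold cmi
  refine congrArg₂ (· - ·) (congrArg₂ (· - ·) (congrArg₂ (· + ·) ?_ ?_) ?_) ?_
  all_goals exact ent_congr p fun ω ω' => by simp only [Prod.ext_iff, hX, hY, hZ]

lemma cmi_eq_zero_of_condIndep {p : Ω → ℝ} (hp : ∀ ω, 0 ≤ p ω)
    {X : Ω → α} {Y : Ω → β} {Z : Ω → γ} (h : CondIndep p X Y Z) : cmi p X Y Z = 0 := by
  have hsplit : ∀ ω, p ω * (Real.log (Pr p fun ω' => X ω' = X ω ∧ Y ω' = Y ω ∧ Z ω' = Z ω)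
      + Real.log (Pr p fun ω' => Z ω' = Z ω)) = p ω * (Real.log (Pr p fun ω' =>
      X ω' = X ω ∧ Z ω' = Z ω) + Real.log (Pr p fun ω' => Y ω' = Y ω ∧ Z ω' = Z ω)) := by
    intro ω
    rcases (hp ω).eq_or_lt with hpω | hpω
    · simp [← hpω]
    have pos : ∀ {E : Ω → Prop}, E ω → 0 < Pr p E := fun hE => Pr_pos hp hE hpω
    rw [← Real.log_mul, ← Real.log_mul, h]
    all_goals exact (pos (by simp)).ne'
  simp only [cmi, ent_eq_neg_sum_log, Prod.ext_iff]
  have := Finset.sum_congr rfl fun ω (_ : ω ∈ Finset.univ) => hsplit ω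
  simp only [mul_add, Finset.sum_add_distrib] at this
  linarith

lemma cmi_pair_sub_cmi {δ : Type} [Fintype δ] (p : Ω → ℝ)
    {W : Ω → α} {A : Ω → β} {Z : Ω → γ} {B : Ω → δ} (hWB : cmi p W B Z = 0) :
    cmi p (fun ω => (W ω, A ω)) Z B - cmi p A Z (fun ω => (W ω, B ω))
      = mi p W Z - mi p W B := by
  have e₁ : ent p (fun ω => ((W ω, A ω), B ω)) = ent p (fun ω => (A ω, W ω, B ω)) :=
    ent_congr p fun ω ω' => by simp only [Prod.ext_iff]; tauto
  have e₂ : ent p (fun ω => ((W ω, A ω), Z ω, B ω)) = ent p (fun ω => (A ω, Z ω, W ω, B ω)) :=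
    ent_congr p fun ω ω' => by simp only [Prod.ext_iff]; tauto
  have e₃ : ent p (fun ω => (Z ω, B ω)) = ent p (fun ω => (B ω, Z ω)) :=
    ent_congr p fun ω ω' => by simp only [Prod.ext_iff]; tauto
  have e₄ : ent p (fun ω => (Z ω, W ω, B ω)) = ent p (fun ω => (W ω, B ω, Z ω)) :=
    ent_congr p fun ω ω' => by simp only [Prod.ext_iff]; tauto
  unfold cmi mi at *
  linarith

end Entropy

section Tuples
variable {Ω L 𝒳 : Type} [Fintype Ω] (X : L → Ω → 𝒳)

lemma XS_eq_XS_iff (T : Finset L) (ω ω' : Ω) :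
    XS X T ω' = XS X T ω ↔ ∀ i ∈ T, X i ω' = X i ω := by
  simp [XS, funext_iff]

lemma XS_insert_eq_XS_insert_iff [DecidableEq L] (a : L) (T : Finset L) (ω ω' : Ω) :
    XS X (insert a T) ω' = XS X (insert a T) ω
      ↔ (X a ω', XS X T ω') = (X a ω, XS X T ω) := by
  simp only [XS_eq_XS_iff, Finset.forall_mem_insert, Prod.ext_iff]

lemma XS_singleton_eq_XS_singleton_iff (a : L) (ω ω' : Ω) :
    XS X {a} ω' = XS X {a} ω ↔ X a ω' = X a ω := by
  simp [XS_eq_XS_iff]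

end Tuples

/-- under the Markov assumption, for `l ∉ S`,
`v(S∪{l}) - v(S) = I(X_l;X_0) - I(X_l; X_{(L\S)\{l}})`. -/
theorem statement10 {Ω L 𝒳 β : Type} [Fintype Ω] [Fintype L] [DecidableEq L] [Fintype 𝒳] [Fintype β]
    (p : Ω → ℝ) (hp : IsPMF p) (X : L → Ω → 𝒳) (X0 : Ω → β)
    (hM : ∀ S T : Finset L, Disjoint S T → CondIndep p (XS X S) (XS X T) X0)
    (l : L) (S : Finset L) (hl : l ∉ S) :
    vGame p X X0 (insert l S) - vGame p X X0 S
      = mi p (X l) X0 - mi p (X l) (XS X (Sᶜ.erase l)) := by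
  set B := Sᶜ.erase l
  have hSc : Sᶜ = insert l B := (Finset.insert_erase (Finset.mem_compl.2 hl)).symm
  have hKc : (insert l S)ᶜ = B := Finset.compl_insert
  have hWB : cmi p (X l) (XS X B) X0 = 0 := by
    rw [cmi_congr p (fun ω ω' => (XS_singleton_eq_XS_singleton_iff X l ω ω').symm)
      (fun _ _ => Iff.rfl) (fun _ _ => Iff.rfl)]
    exact cmi_eq_zero_of_condIndep hp.1 (hM {l} B (by simp [B]))
  rw [← cmi_pair_sub_cmi p (A := XS X S) hWB, vGame, vGame, hKc, hSc,
    cmi_congr p (XS_insert_eq_XS_insert_iff X l S) (fun _ _ => Iff.rfl) (fun _ _ => Iff.rfl),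
    cmi_congr p (fun _ _ => Iff.rfl) (fun _ _ => Iff.rfl) (XS_insert_eq_XS_insert_iff X l B)]
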